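/- arXiv:1802.04077 — 2 statements merged into one kernel-verified Lean document; each statement's English description precedes it below -/
import Mathlib

section
/- Let α be a real number with α ∉ ℤ. The sequence (c^{(n)})_{n=−1}^∞ is a Schauder basis of c(Δ^(α)): every x ∈ c(Δ^(α)) has the representation x = ξ·c^{(−1)} + ∑_{n=0}^∞ ((Δ^(α)x)_n − ξ)·c^{(n)}, where ξ = lim_{n→∞} (Δ^(α)x)_n, the series converging in the norm ‖x‖ = sup_m |(Δ^(α)x)_m|, and this is the unique representation of x as a norm-convergent series λ_{−1} c^{(−1)} + ∑_{n≥0} λ_n c^{(n)} with real scalars. -/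
open Filter Finset Topology

/-- The fractional difference matrix `Δ^(α)`. -/
noncomputable def fracDelta (α : ℝ) (n k : ℕ) : ℝ :=
  if k ≤ n then
    (-1 : ℝ) ^ (n - k) * Real.Gamma (α + 1) /
      ((Nat.factorial (n - k) : ℝ) * Real.Gamma (α - n + k + 1))
  else 0

/-- `(Δ^(α)x)_n = ∑_{k=0}^n Δ^(α)_{nk} x_k`. -/
noncomputable def fracDeltaSeq (α : ℝ) (x : ℕ → ℝ) (n : ℕ) : ℝ :=
  ∑ k ∈ Finset.range (n + 1), fracDelta α n k * x k

/-- Membership in `c(Δ^(α))`. -/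
def memCDelta (α : ℝ) (x : ℕ → ℝ) : Prop :=
  ∃ L : ℝ, Tendsto (fracDeltaSeq α x) atTop (nhds L)

/-- The norm `‖x‖ = sup_m |(Δ^(α)x)_m|`. -/
noncomputable def deltaNorm (α : ℝ) (x : ℕ → ℝ) : ℝ :=
  ⨆ m, |fracDeltaSeq α x m|

/-- The basis sequence `c^{(n)}` for `n ≥ 0` (the `n`-th column of `Δ^(−α)`). -/
noncomputable def cBasis (α : ℝ) (n k : ℕ) : ℝ := fracDelta (-α) k n

/-- The basis sequence `c^{(−1)}`:
`c^{(−1)}_k = ∑_{n=0}^{k} (−1)^{k−n} Γ(−α+1)/((k−n)!·Γ(−α+n−k+1))`. -/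
noncomputable def cBasisNegOne (α : ℝ) (k : ℕ) : ℝ :=
  ∑ n ∈ Finset.range (k + 1), fracDelta (-α) k n

/-!
Since `Γ(α + 1) / ((n - k)! Γ(α - n + k + 1)) = binom(α, n - k)`, the matrix `Δ^(α)` is the
Toeplitz matrix of the power series `(1 - z)^α`, and Chu–Vandermonde says that `Δ^(-α)` is its
inverse. Hence `Δ^(α) c^(n) = e_n` and `Δ^(α) c^(-1) = (1, 1, …)`, so `Δ^(α)` maps the residual
`x - λ₋₁ c^(-1) - ∑_{n<m} λₙ c^(n)` to `(aₖ - λ₋₁ - [k < m] λₖ)ₖ` with `a = Δ^(α) x`, and both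
claims become elementary statements about the sup norm on convergent sequences.
-/

theorem Real.Gamma_add_one_eq_descPochhammer_smeval_mul {α : ℝ} {j : ℕ} (hα : ∀ i < j, α ≠ i) :
    Real.Gamma (α + 1) = (descPochhammer ℤ j).smeval α * Real.Gamma (α - j + 1) := by
  induction j with
  | zero => simp
  | succ j ih =>
    have hj : α - j ≠ 0 := sub_ne_zero.2 (hα j j.lt_succ_self)
    rw [ih fun i hi => hα i (hi.trans j.lt_succ_self), descPochhammer_succ_right,
      Polynomial.smeval_mul, show α - j + 1 = α - (j + 1 : ℕ) + 1 + 1 by push_cast; ring,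
      Real.Gamma_add_one (by push_cast; rwa [sub_add_eq_sub_sub, sub_add_cancel])]
    simp only [Polynomial.smeval_sub, Polynomial.smeval_X, Polynomial.smeval_natCast, pow_one,
      pow_zero, nsmul_eq_mul, mul_one]
    push_cast
    ring_nf

theorem Ring.sum_range_choose_neg_mul_choose {R : Type*} [Ring R] [BinomialRing R] (r : R)
    (d : ℕ) : ∑ i ∈ range (d + 1), choose (-r) i * choose r (d - i) = if d = 0 then 1 else 0 := by
  have h := add_choose_eq d (Commute.refl r).neg_left
  rwa [neg_add_cancel, choose_zero_ite, Nat.sum_antidiagonal_eq_sum_range_succ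
    fun i j => choose (-r) i * choose r j, eq_comm] at h

theorem fracDelta_of_lt {α : ℝ} {n k : ℕ} (h : n < k) : fracDelta α n k = 0 :=
  if_neg h.not_ge

theorem fracDelta_eq_neg_one_pow_mul_choose {α : ℝ} (hα : ∀ m : ℤ, α ≠ m) {n k : ℕ} (h : k ≤ n) :
    fracDelta α n k = (-1) ^ (n - k) * Ring.choose α (n - k) := by
  have hΓ : Real.Gamma (α - (n - k : ℕ) + 1) ≠ 0 := Real.Gamma_ne_zero fun m hm =>
    hα ((n - k : ℕ) - 1 - m) (by push_cast; linarith)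
  have hfac : ((n - k).factorial : ℝ) ≠ 0 := Nat.cast_ne_zero.2 (Nat.factorial_ne_zero _)
  rw [fracDelta, if_pos h, show α - n + k + 1 = α - (n - k : ℕ) + 1 by push_cast [h]; ring,
    Real.Gamma_add_one_eq_descPochhammer_smeval_mul fun i _ => by exact_mod_cast hα i,
    Ring.descPochhammer_eq_factorial_smul_choose, nsmul_eq_mul]
  field_simp

theorem sum_fracDelta_mul_fracDelta_neg {α : ℝ} (hα : ∀ m : ℤ, α ≠ m) (m n : ℕ) :
    ∑ k ∈ range (m + 1), fracDelta α m k * fracDelta (-α) k n = if m = n then 1 else 0 := by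
  rcases lt_or_ge m n with hmn | hnm
  · rw [if_neg hmn.ne]
    refine sum_eq_zero fun k hk => ?_
    rw [fracDelta_of_lt (n := k) (by rw [mem_range] at hk; omega), mul_zero]
  obtain ⟨d, rfl⟩ := Nat.exists_eq_add_of_le hnm
  have hα' : ∀ m : ℤ, -α ≠ m := fun m h => hα (-m) (by push_cast; linarith)
  have hterm : ∀ i ∈ range (d + 1), fracDelta α (n + d) (n + i) * fracDelta (-α) (n + i) n =
      (-1) ^ d * (Ring.choose (-α) i * Ring.choose α (d - i)) := fun i hi => by
    have hid : i ≤ d := Nat.lt_succ_iff.1 (mem_range.1 hi)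
    rw [fracDelta_eq_neg_one_pow_mul_choose hα (by omega),
      fracDelta_eq_neg_one_pow_mul_choose hα' (by omega), Nat.add_sub_add_left,
      Nat.add_sub_cancel_left, ← Nat.sub_add_cancel hid, pow_add, Nat.sub_add_cancel hid]
    ring
  rw [add_assoc, sum_range_add, sum_eq_zero fun k hk => by
      rw [fracDelta_of_lt (mem_range.1 hk), mul_zero], zero_add, sum_congr rfl hterm,
    ← mul_sum, Ring.sum_range_choose_neg_mul_choose]
  rcases d with _ | d <;> simp

@[simps]
noncomputable def fracDeltaLinearMap (α : ℝ) : (ℕ → ℝ) →ₗ[ℝ] ℕ → ℝ where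
  toFun := fracDeltaSeq α
  map_add' x y := by ext n; simp [fracDeltaSeq, mul_add, sum_add_distrib]
  map_smul' c x := by ext n; simp [fracDeltaSeq, mul_sum, mul_left_comm]

theorem fracDeltaSeq_congr {α : ℝ} {x y : ℕ → ℝ} {m : ℕ} (h : ∀ k ≤ m, x k = y k) :
    fracDeltaSeq α x m = fracDeltaSeq α y m :=
  sum_congr rfl fun k hk => by rw [h k (Nat.lt_succ_iff.1 (mem_range.1 hk))]

theorem fracDeltaSeq_cBasis {α : ℝ} (hα : ∀ m : ℤ, α ≠ m) (n m : ℕ) :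
    fracDeltaSeq α (cBasis α n) m = if m = n then 1 else 0 :=
  sum_fracDelta_mul_fracDelta_neg hα m n

theorem fracDeltaSeq_cBasisNegOne {α : ℝ} (hα : ∀ m : ℤ, α ≠ m) (m : ℕ) :
    fracDeltaSeq α (cBasisNegOne α) m = 1 := by
  have hagree : ∀ k ≤ m, cBasisNegOne α k = (∑ n ∈ range (m + 1), cBasis α n) k := by
    intro k hk
    rw [cBasisNegOne, Finset.sum_apply]
    refine sum_subset (range_subset_range.2 (by omega)) fun n _ hn => ?_
    exact fracDelta_of_lt (by rw [mem_range] at hn; omega)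
  rw [fracDeltaSeq_congr hagree, ← fracDeltaLinearMap_apply, map_sum, Finset.sum_apply]
  simp [fracDeltaSeq_cBasis hα]

theorem fracDeltaSeq_sub_expansion {α : ℝ} (hα : ∀ m : ℤ, α ≠ m) (x : ℕ → ℝ) (c : ℝ)
    (l : ℕ → ℝ) (m k : ℕ) :
    fracDeltaSeq α (x - fun j => c * cBasisNegOne α j + ∑ n ∈ range m, l n * cBasis α n j) k =
      fracDeltaSeq α x k - c - if k < m then l k else 0 := by
  have hexp : (fun j => c * cBasisNegOne α j + ∑ n ∈ range m, l n * cBasis α n j) =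
      c • cBasisNegOne α + ∑ n ∈ range m, l n • cBasis α n := by
    ext j; simp [Finset.sum_apply]
  rw [hexp, ← fracDeltaLinearMap_apply, map_sub, map_add, map_smul, map_sum]
  simp [fracDeltaSeq_cBasis hα, fracDeltaSeq_cBasisNegOne hα, Finset.sum_apply, sub_sub]

theorem tendsto_iSup_abs_sub_sub_ite_self {a : ℕ → ℝ} {ξ : ℝ} (ha : Tendsto a atTop (𝓝 ξ)) :
    Tendsto (fun m => ⨆ k, |a k - ξ - if k < m then a k - ξ else 0|) atTop (𝓝 0) := by
  rw [Metric.tendsto_atTop]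
  intro ε hε
  obtain ⟨N, hN⟩ := Metric.tendsto_atTop.1 ha (ε / 2) (half_pos hε)
  refine ⟨N, fun m hm => ?_⟩
  have hbound : ⨆ k, |a k - ξ - if k < m then a k - ξ else 0| ≤ ε / 2 := by
    refine Real.iSup_le (fun k => ?_) (half_pos hε).le
    split_ifs with hk
    · simpa using (half_pos hε).le
    · simpa [← Real.dist_eq] using (hN k (by omega)).le
  rw [Real.dist_eq, sub_zero, abs_of_nonneg (Real.iSup_nonneg fun _ => abs_nonneg _)]
  linarith

theorem eq_of_tendsto_iSup_abs_sub_sub_ite {a l : ℕ → ℝ} {ξ c : ℝ} (ha : Tendsto a atTop (𝓝 ξ))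
    (h : Tendsto (fun m => ⨆ k, |a k - c - if k < m then l k else 0|) atTop (𝓝 0)) :
    c = ξ ∧ ∀ k, l k = a k - ξ := by
  set r : ℕ → ℕ → ℝ := fun m k => a k - c - if k < m then l k else 0
  have hr : ∀ m, Tendsto (r m) atTop (𝓝 (ξ - c)) := fun m =>
    (ha.sub_const c).congr' <| by
      filter_upwards [eventually_ge_atTop m] with k hk
      simp [r, not_lt.2 hk]
  have hle : ∀ m k, |r m k| ≤ ⨆ k, |r m k| := fun m k => le_ciSup (hr m).abs.bddAbove_range k
  have hc : |ξ - c| ≤ 0 :=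
    ge_of_tendsto' h fun m => le_of_tendsto' (hr m).abs (hle m)
  have hl : ∀ k, |a k - c - l k| ≤ 0 := fun k =>
    ge_of_tendsto h <| by
      filter_upwards [eventually_gt_atTop k] with m hm
      simpa [r, hm] using hle m k
  have hcξ : c = ξ := by linarith [abs_nonpos_iff.1 hc]
  exact ⟨hcξ, fun k => by linarith [abs_nonpos_iff.1 (hl k)]⟩

/-- `(c^{(n)})_{n=−1}^∞` is a Schauder basis of `c(Δ^(α))`: every `x ∈ c(Δ^(α))`
has the unique representation `x = ξ c^{(−1)} + ∑_{n≥0} ((Δ^(α)x)_n − ξ) c^{(n)}`,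
where `ξ = lim_n (Δ^(α)x)_n`. -/
theorem schauder_basis_cDelta (α : ℝ) (hα : ∀ m : ℤ, α ≠ (m : ℝ)) :
    memCDelta α (cBasisNegOne α) ∧
    (∀ n : ℕ, memCDelta α (fun k => cBasis α n k)) ∧
    ∀ x : ℕ → ℝ, memCDelta α x →
      ∀ ξ : ℝ, Tendsto (fracDeltaSeq α x) atTop (nhds ξ) →
        (Tendsto
          (fun m => deltaNorm α
            (x - fun j => ξ * cBasisNegOne α j +
              ∑ n ∈ Finset.range m, (fracDeltaSeq α x n - ξ) * cBasis α n j))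
          atTop (nhds 0)) ∧
        (∀ (lneg : ℝ) (l : ℕ → ℝ),
          Tendsto
            (fun m => deltaNorm α
              (x - fun j => lneg * cBasisNegOne α j +
                ∑ n ∈ Finset.range m, l n * cBasis α n j))
            atTop (nhds 0) →
          lneg = ξ ∧ l = fun n => fracDeltaSeq α x n - ξ) := by
  refine ⟨⟨1, ?_⟩, fun n => ⟨0, ?_⟩, fun x _ ξ hξ => ⟨?_, fun c l h => ?_⟩⟩
  · simp only [funext (fracDeltaSeq_cBasisNegOne hα), tendsto_const_nhds]
  · refine tendsto_const_nhds.congr' ?_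
    filter_upwards [eventually_gt_atTop n] with m hm
    rw [fracDeltaSeq_cBasis hα, if_neg hm.ne']
  · simpa only [deltaNorm, fracDeltaSeq_sub_expansion hα] using
      tendsto_iSup_abs_sub_sub_ite_self hξ
  · simp only [deltaNorm, fracDeltaSeq_sub_expansion hα] at h
    obtain ⟨rfl, hl⟩ := eq_of_tendsto_iSup_abs_sub_sub_ite hξ h
    exact ⟨rfl, funext hl⟩
end

section
/- Let α be a real number with α ∉ ℤ. The space ℓ∞(Δ^(α)) has no Schauder basis: there is no sequence (b_n)_{n=0}^∞ of elements of ℓ∞(Δ^(α)) such that every x ∈ ℓ∞(Δ^(α)) admits a unique sequence of real scalars (λ_n) with x = ∑_{n=0}^∞ λ_n b_n, the series converging in the norm ‖x‖ = sup_m |(Δ^(α)x)_m|. -/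
open Filter Finset Topology

/-- Membership in `ℓ∞(Δ^(α))`. -/
def memLinfDelta (α : ℝ) (x : ℕ → ℝ) : Prop :=
  ∃ C : ℝ, ∀ n, |fracDeltaSeq α x n| ≤ C

/-!
`Δ^(α)` is lower triangular with unit diagonal, so it maps sequences bijectively onto sequences,
and `x ↦ Δ^(α)x` carries `ℓ∞(Δ^(α))` isometrically onto `ℓ∞`. A space with a Schauder basis is
separable, since finite combinations of the basis vectors are dense. But `ℓ∞` is not separable:
the indicator sequences of the uncountably many subsets of `ℕ` are pairwise at distance `1`.
-/

open TopologicalSpace BoundedContinuousFunction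

theorem not_separableSpace_boundedContinuousFunction_nat_real : ¬ SeparableSpace (ℕ →ᵇ ℝ) := by
  intro _
  let ind : Set ℕ → ℕ →ᵇ ℝ := fun s =>
    ofNormedAddCommGroupDiscrete (s.indicator 1) 1 fun n => by
      by_cases hn : n ∈ s <;> simp [hn]
  have hsep : Pairwise fun s t => 1 ≤ dist (ind s) (ind t) := by
    intro s t hst
    obtain ⟨n, hn⟩ : ∃ n, ¬ (n ∈ s ↔ n ∈ t) := by
      by_contra! h
      exact hst (Set.ext h)
    refine le_trans ?_ (dist_coe_le_dist n)
    by_cases hs : n ∈ s <;> by_cases ht : n ∈ t <;> simp_all [ind, Real.dist_eq]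
  have : Countable (Set ℕ) :=
    Pairwise.countable_of_isOpen_disjoint (s := fun s => Metric.ball (ind s) (1 / 2))
      (fun s t hst => Metric.ball_disjoint_ball (by linarith [hsep hst]))
      (fun _ => Metric.isOpen_ball) (fun _ => Metric.nonempty_ball.2 one_half_pos)
  obtain ⟨f, hf⟩ := exists_surjective_nat (Set ℕ)
  exact Function.cantor_surjective f hf

theorem separableSpace_of_forall_tendsto_sum_smul {E : Type*} [NormedAddCommGroup E]
    [NormedSpace ℝ E] (y : ℕ → E)
    (hy : ∀ t : E, ∃ l : ℕ → ℝ, Tendsto (fun m => ∑ n ∈ range m, l n • y n) atTop (𝓝 t)) :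
    SeparableSpace E := by
  have hdense : Set.univ ⊆ closure (Submodule.span ℝ (Set.range y) : Set E) := fun t _ => by
    obtain ⟨l, hl⟩ := hy t
    exact mem_closure_of_tendsto hl <| Eventually.of_forall fun m =>
      Submodule.sum_mem _ fun n _ => Submodule.smul_mem _ _ (Submodule.subset_span ⟨n, rfl⟩)
  exact isSeparable_univ_iff.1 ((Set.countable_range y).isSeparable.span.closure.mono hdense)

def lowerTriangularSolve {R : Type*} [Ring R] (a : ℕ → ℕ → R) (t : ℕ → R) :
    ℕ → R
  | n => t n - ∑ k ∈ (range n).attach, a n k * lowerTriangularSolve a t k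
  termination_by n => n
  decreasing_by exact mem_range.mp k.2

theorem sum_range_succ_mul_lowerTriangularSolve {R : Type*} [Ring R] {a : ℕ → ℕ → R}
    (ha : ∀ n, a n n = 1) (t : ℕ → R) (n : ℕ) :
    ∑ k ∈ range (n + 1), a n k * lowerTriangularSolve a t k = t n := by
  rw [sum_range_succ, ha, one_mul, lowerTriangularSolve,
    sum_attach (range n) fun k => a n k * lowerTriangularSolve a t k]
  abel

section FracDelta

variable {α : ℝ}

theorem fracDelta_self (hΓ : Real.Gamma (α + 1) ≠ 0) (n : ℕ) : fracDelta α n n = 1 := by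
  simp [fracDelta, hΓ]

theorem fracDeltaSeq_surjective (hΓ : Real.Gamma (α + 1) ≠ 0) :
    Function.Surjective (fracDeltaSeq α) := fun t =>
  ⟨lowerTriangularSolve (fracDelta α) t,
    funext <| sum_range_succ_mul_lowerTriangularSolve (fracDelta_self hΓ) t⟩

theorem fracDeltaSeq_sub (x y : ℕ → ℝ) (n : ℕ) :
    fracDeltaSeq α (x - y) n = fracDeltaSeq α x n - fracDeltaSeq α y n := by
  simp [fracDeltaSeq, mul_sub, sum_sub_distrib]

theorem fracDeltaSeq_sum_mul {ι : Type*} (s : Finset ι) (c : ι → ℝ) (b : ι → ℕ → ℝ) (n : ℕ) :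
    fracDeltaSeq α (fun j => ∑ i ∈ s, c i * b i j) n = ∑ i ∈ s, c i * fracDeltaSeq α (b i) n := by
  simp only [fracDeltaSeq, mul_sum]
  rw [sum_comm]
  exact sum_congr rfl fun i _ => sum_congr rfl fun k _ => by ring

theorem deltaNorm_eq_norm {x : ℕ → ℝ} {f : ℕ →ᵇ ℝ} (h : ∀ n, fracDeltaSeq α x n = f n) :
    deltaNorm α x = ‖f‖ := by
  simp only [deltaNorm, norm_eq_iSup_norm, h, Real.norm_eq_abs]

end FracDelta

/-- The space `ℓ∞(Δ^(α))` has no Schauder basis. -/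
theorem no_schauder_basis_linfDelta (α : ℝ) (hα : ∀ m : ℤ, α ≠ (m : ℝ)) :
    ¬ ∃ b : ℕ → (ℕ → ℝ), (∀ n, memLinfDelta α (b n)) ∧
      ∀ x : ℕ → ℝ, memLinfDelta α x →
        ∃! l : ℕ → ℝ,
          Tendsto
            (fun m => deltaNorm α (x - fun j => ∑ n ∈ Finset.range m, l n * b n j))
            atTop (nhds 0) := by
  rintro ⟨b, hb, hbasis⟩
  have hΓ : Real.Gamma (α + 1) ≠ 0 :=
    Real.Gamma_ne_zero fun m h => hα (-(m + 1)) (by push_cast; linarith)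
  choose C hC using hb
  let y : ℕ → ℕ →ᵇ ℝ := fun i => ofNormedAddCommGroupDiscrete (fracDeltaSeq α (b i)) (C i) (hC i)
  refine not_separableSpace_boundedContinuousFunction_nat_real <|
    separableSpace_of_forall_tendsto_sum_smul y fun t => ?_
  obtain ⟨x, hx⟩ := fracDeltaSeq_surjective hΓ t
  obtain ⟨l, hl, -⟩ := hbasis x ⟨‖t‖, fun n => by rw [hx]; exact norm_coe_le_norm t n⟩
  refine ⟨l, tendsto_iff_norm_sub_tendsto_zero.2 (hl.congr fun m => ?_)⟩
  rw [norm_sub_rev]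
  refine deltaNorm_eq_norm fun n => ?_
  simp [fracDeltaSeq_sub, fracDeltaSeq_sum_mul, hx, y]
end
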